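/- For ε ∈ (0,1) fixed, (p · log(1 + (1/p)(1/ε − 1)))^{1/α} → 0 as p → 0⁺ (for α > 1), and consequently the ratio η_asym/η_sym = (−log ε)^{1/α} / (p·log(1 + (1/p)(1/ε − 1)))^{1/α} → +∞ as p → 0⁺. -/

import Mathlib

/-! Since `1 + c / p = (p + c) / p`, the quantity `p * log (1 + c / p)` equals
`p * log (p + c) - p * log p`, and both terms tend to `0` as `p → 0⁺`. Raising to the power
`1 / α > 0` preserves the limit `0⁺`, so the constant `(-log ε) ^ (1 / α) > 0` divided by it
tends to `+∞`. -/

open Real Filter Topology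

namespace Real

lemma tendsto_mul_log_add_nhdsGT_zero {c : ℝ} (hc : 0 ≤ c) :
    Tendsto (fun p : ℝ => p * log (p + c)) (𝓝[>] 0) (𝓝 0) := by
  rcases hc.eq_or_lt with rfl | hc
  · simpa using (continuous_mul_log.continuousWithinAt (s := Set.Ioi 0) (x := 0)).tendsto
  · have : ContinuousAt (fun p : ℝ => p * log (p + c)) 0 :=
      continuousAt_id.mul ((continuousAt_log (by simpa using hc.ne')).comp (by fun_prop))
    simpa using (this.continuousWithinAt (s := Set.Ioi 0)).tendsto

lemma tendsto_mul_log_one_add_div_nhdsGT_zero {c : ℝ} (hc : 0 ≤ c) :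
    Tendsto (fun p : ℝ => p * log (1 + (1 / p) * c)) (𝓝[>] 0) (𝓝 0) := by
  have hdiff : Tendsto (fun p : ℝ => p * log (p + c) - p * log p) (𝓝[>] 0) (𝓝 0) := by
    simpa using (tendsto_mul_log_add_nhdsGT_zero hc).sub
      (continuous_mul_log.continuousWithinAt (s := Set.Ioi 0) (x := 0)).tendsto
  refine hdiff.congr' ?_
  filter_upwards [self_mem_nhdsWithin] with p (hp : 0 < p)
  have hsplit : 1 + (1 / p) * c = (p + c) / p := by field_simp
  rw [hsplit, log_div (by positivity) hp.ne', mul_sub]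

lemma mul_log_one_add_div_pos {c p : ℝ} (hc : 0 < c) (hp : 0 < p) :
    0 < p * log (1 + (1 / p) * c) :=
  mul_pos hp (log_pos (lt_add_of_pos_right 1 (by positivity)))

end Real

lemma Filter.Tendsto.rpow_nhdsGT_zero {α : Type*} {l : Filter α} {f : α → ℝ}
    (hf : Tendsto f l (𝓝[>] 0)) {r : ℝ} (hr : 0 < r) :
    Tendsto (fun x => f x ^ r) l (𝓝[>] 0) := by
  refine tendsto_nhdsWithin_iff.2 ⟨?_, ?_⟩
  · simpa [Function.comp_def, zero_rpow hr.ne'] using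
      (continuousAt_rpow_const 0 r (Or.inr hr.le)).tendsto.comp
        (tendsto_nhds_of_tendsto_nhdsWithin hf)
  · filter_upwards [hf self_mem_nhdsWithin] with x (hx : 0 < f x)
    exact rpow_pos_of_pos hx r

theorem lac_eta_ratio_tendsto (ε α : ℝ) (hε : ε ∈ Set.Ioo (0:ℝ) 1) (hα : 1 < α) :
    Tendsto (fun p : ℝ => (p * Real.log (1 + (1 / p) * (1 / ε - 1))) ^ (1 / α))
      (nhdsWithin 0 (Set.Ioi 0)) (nhds 0) ∧
    Tendsto (fun p : ℝ =>
        (-Real.log ε) ^ (1 / α) / (p * Real.log (1 + (1 / p) * (1 / ε - 1))) ^ (1 / α))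
      (nhdsWithin 0 (Set.Ioi 0)) atTop := by
  obtain ⟨hε0, hε1⟩ := hε
  have hc : 0 < 1 / ε - 1 := by rw [sub_pos, lt_div_iff₀ hε0]; linarith
  have hroot : Tendsto (fun p : ℝ => (p * log (1 + (1 / p) * (1 / ε - 1))) ^ (1 / α))
      (𝓝[>] 0) (𝓝[>] 0) := by
    refine Tendsto.rpow_nhdsGT_zero ?_ (one_div_pos.2 (by linarith))
    refine tendsto_nhdsWithin_iff.2 ⟨tendsto_mul_log_one_add_div_nhdsGT_zero hc.le, ?_⟩
    filter_upwards [self_mem_nhdsWithin] with p hp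
    exact mul_log_one_add_div_pos hc hp
  have hconst : 0 < (-log ε) ^ (1 / α) := rpow_pos_of_pos (neg_pos.2 (log_neg hε0 hε1)) _
  refine ⟨tendsto_nhds_of_tendsto_nhdsWithin hroot, ?_⟩
  simpa [div_eq_mul_inv] using hroot.inv_tendsto_nhdsGT_zero.const_mul_atTop hconst
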